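/- arXiv:1610.00367 — 7 statements merged into one kernel-verified Lean document; each statement's English description precedes it below -/
import Mathlib

section
/- Let p > 2 be prime, K = F_p(t), Φ: G_m^3 → G_m^3 given by Φ(x,y,z) = (tx, (1+t)y, (1-t)z), V the hyperplane y + z - 2x = 2, and α = (1,1,1). Then the set of n ∈ ℕ₀ with Φ^n(α) ∈ V equals {p^{n₁} + p^{n₂} : n₁, n₂ ∈ ℕ₀}. -/
open Polynomial

section aux
variable {p : ℕ} [Fact p.Prime]

lemma pow_aux (hp2 : 2 < p) :
    ∀ k : ℕ, ((1 + X : (ZMod p)[X]))^k = 1 + X^k → ∃ b : ℕ, k = p^b := by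
  intro k
  induction k using Nat.strong_induction_on with
  | _ k ih =>
    intro hk
    have hp1 : 1 < p := (Fact.out : p.Prime).one_lt
    rcases Nat.eq_zero_or_pos k with h0 | hpos
    · exfalso
      subst h0
      simp only [pow_zero] at hk
      have := congrArg (Polynomial.eval 0) hk
      simp at this
    by_cases hd : p ∣ k
    · obtain ⟨q, rfl⟩ := hd
      have hq0 : 0 < q := by
        rcases Nat.eq_zero_or_pos q with h | h
        · simp [h] at hpos
        · exact h
      have e1 : ((1 + X : (ZMod p)[X]))^p = 1 + X^p := by
        rw [add_pow_char, one_pow]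
      have hq : ((1 + X : (ZMod p)[X]))^q = 1 + X^q := by
        apply Polynomial.expand_injective (by omega : 0 < p)
        simp only [map_pow, map_add, map_one, Polynomial.expand_X]
        calc ((1 + X^p : (ZMod p)[X]))^q = (1+X)^(p*q) := by rw [← e1, ← pow_mul]
          _ = 1 + X^(p*q) := hk
          _ = 1 + (X^p)^q := by rw [← pow_mul]
      have hqlt : q < p * q := by
        calc q = 1 * q := (one_mul q).symm
        _ < p * q := (Nat.mul_lt_mul_right hq0).mpr hp1
      obtain ⟨b, rfl⟩ := ih q hqlt hq
      exact ⟨b + 1, by ring⟩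
    · -- p ∤ k : differentiate
      have hder := congrArg Polynomial.derivative hk
      simp only [Polynomial.derivative_pow, Polynomial.derivative_add,
        Polynomial.derivative_one, Polynomial.derivative_X, Polynomial.derivative_X_pow] at hder
      have hkne : (C (k : ZMod p) : (ZMod p)[X]) ≠ 0 := by
        rw [Ne, Polynomial.C_eq_zero]
        exact fun h => hd ((ZMod.natCast_eq_zero_iff k p).mp h)
      have h2 : ((1 + X : (ZMod p)[X]))^(k-1) = X^(k-1) := by
        apply mul_left_cancel₀ hkne
        linear_combination hder
      have := congrArg (Polynomial.eval 0) h2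
      simp at this
      rcases Nat.lt_or_ge k 2 with hk2 | hk2
      · exact ⟨0, by rw [pow_zero]; omega⟩
      · exfalso
        rw [zero_pow (by omega : k - 1 ≠ 0)] at this
        exact one_ne_zero this

lemma main_aux (hp2 : 2 < p) :
    ∀ n : ℕ, ((1 + X : (ZMod p)[X]))^n + (1 - X)^n = 2 + 2 * X^n →
      ∃ a b : ℕ, n = p^a + p^b := by
  intro n
  induction n using Nat.strong_induction_on with
  | _ n ih =>
    intro hn
    have hp1 : 1 < p := (Fact.out : p.Prime).one_lt
    rcases Nat.eq_zero_or_pos n with h0 | hpos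
    · exfalso
      subst h0
      simp only [pow_zero] at hn
      have := congrArg (Polynomial.eval 0) hn
      simp at this
      have h2 : ((2 : ℕ) : ZMod p) = 0 := by push_cast; linear_combination -this
      rw [ZMod.natCast_eq_zero_iff] at h2
      have := Nat.le_of_dvd (by norm_num) h2
      omega
    by_cases hd : p ∣ n
    · obtain ⟨q, rfl⟩ := hd
      have hq0 : 0 < q := by
        rcases Nat.eq_zero_or_pos q with h | h
        · simp [h] at hpos
        · exact h
      have e1 : ((1 + X : (ZMod p)[X]))^p = 1 + X^p := by
        rw [add_pow_char, one_pow]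
      have e2 : ((1 - X : (ZMod p)[X]))^p = 1 - X^p := by
        rw [sub_pow_char, one_pow]
      have hq : ((1 + X : (ZMod p)[X]))^q + (1 - X)^q = 2 + 2 * X^q := by
        apply Polynomial.expand_injective (by omega : 0 < p)
        simp only [map_add, map_pow, map_sub, map_mul, map_one, map_ofNat,
          Polynomial.expand_X]
        calc ((1 + X^p : (ZMod p)[X]))^q + (1 - X^p)^q
            = (1+X)^(p*q) + (1-X)^(p*q) := by rw [← e1, ← e2, ← pow_mul, ← pow_mul]
          _ = 2 + 2 * X^(p*q) := hn
          _ = 2 + 2 * (X^p)^q := by rw [← pow_mul]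
      have hqlt : q < p * q := by
        calc q = 1 * q := (one_mul q).symm
        _ < p * q := (Nat.mul_lt_mul_right hq0).mpr hp1
      obtain ⟨a, b, rfl⟩ := ih q hqlt hq
      exact ⟨a + 1, b + 1, by ring⟩
    · -- p ∤ n
      have hn1 : n - 1 + 1 = n := Nat.succ_pred_eq_of_pos hpos
      have hder := congrArg Polynomial.derivative hn
      simp only [Polynomial.derivative_add, Polynomial.derivative_pow,
        Polynomial.derivative_sub, Polynomial.derivative_one, Polynomial.derivative_X,
        Polynomial.derivative_mul, Polynomial.derivative_X_pow,
        Polynomial.derivative_ofNat] at hder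
      have hkne : (C (n : ZMod p) : (ZMod p)[X]) ≠ 0 := by
        rw [Ne, Polynomial.C_eq_zero]
        exact fun h => hd ((ZMod.natCast_eq_zero_iff n p).mp h)
      have h2 : ((1 + X : (ZMod p)[X]))^(n-1) - (1 - X)^(n-1) = 2 * X^(n-1) := by
        apply mul_left_cancel₀ hkne
        linear_combination hder
      have horig : (1 + X) * ((1 + X : (ZMod p)[X]))^(n-1) + (1 - X) * (1 - X)^(n-1)
          = 2 + 2 * X^(n-1) * X := by
        rw [mul_comm (1 + X : (ZMod p)[X]), mul_comm (1 - X : (ZMod p)[X]),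
          ← pow_succ, ← pow_succ, hn1, mul_assoc, ← pow_succ, hn1]
        exact hn
      have h2poly : (2 : (ZMod p)[X]) ≠ 0 := by
        intro h
        have := congrArg (Polynomial.eval 0) h
        simp at this
        have h2' : ((2 : ℕ) : ZMod p) = 0 := by push_cast; linear_combination this
        rw [ZMod.natCast_eq_zero_iff] at h2'
        have := Nat.le_of_dvd (by norm_num) h2'
        omega
      have hAval : ((1 + X : (ZMod p)[X]))^(n-1) = 1 + X^(n-1) := by
        apply mul_left_cancel₀ h2poly
        linear_combination horig + (1 - X) * h2
      obtain ⟨b, hb⟩ := pow_aux hp2 (n - 1) hAval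
      exact ⟨0, b, by rw [pow_zero]; omega⟩

end aux

/-- In `K = 𝔽_p(t)` with `p > 2` prime, for the self-map
`Φ(x,y,z) = (t·x, (1+t)·y, (1-t)·z)` of `𝔾_m^3`, the hyperplane
`V : y + z - 2x = 2` and `α = (1,1,1)`, the return set
`{n : Φ^n(α) ∈ V}` equals `{p^{n₁} + p^{n₂} : n₁, n₂ ∈ ℕ₀}`. -/
theorem stmt0 (p : ℕ) [Fact p.Prime] (hp2 : 2 < p)
    (t : RatFunc (ZMod p)) (ht : t = RatFunc.X)
    (Φ : RatFunc (ZMod p) × RatFunc (ZMod p) × RatFunc (ZMod p) →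
        RatFunc (ZMod p) × RatFunc (ZMod p) × RatFunc (ZMod p))
    (hΦ : ∀ w, Φ w = (t * w.1, (1 + t) * w.2.1, (1 - t) * w.2.2))
    (V : Set (RatFunc (ZMod p) × RatFunc (ZMod p) × RatFunc (ZMod p)))
    (hV : V = {w | w.2.1 + w.2.2 - 2 * w.1 = 2})
    (α : RatFunc (ZMod p) × RatFunc (ZMod p) × RatFunc (ZMod p)) (hα : α = (1, 1, 1)) :
    {n : ℕ | Φ^[n] α ∈ V} = {m : ℕ | ∃ n₁ n₂ : ℕ, m = p ^ n₁ + p ^ n₂} := by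
  subst hV hα
  haveI : CharP (RatFunc (ZMod p)) p :=
    charP_of_injective_algebraMap (RatFunc.algebraMap_injective (ZMod p)) p
  have hiter : ∀ n : ℕ, Φ^[n] (1, 1, 1) = (t^n, (1+t)^n, (1-t)^n) := by
    intro n
    induction n with
    | zero => simp
    | succ n ihn =>
      rw [Function.iterate_succ_apply', ihn, hΦ]
      simp only [Prod.mk.injEq]
      refine ⟨?_, ?_, ?_⟩ <;> rw [pow_succ] <;> ring
  ext n
  simp only [Set.mem_setOf_eq, hiter]
  constructor
  · intro h
    -- h : (1+t)^n + (1-t)^n - 2 * t^n = 2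
    subst ht
    have hpoly : ((1 + Polynomial.X : (ZMod p)[X]))^n + (1 - Polynomial.X)^n
        = 2 + 2 * Polynomial.X^n := by
      apply RatFunc.algebraMap_injective (ZMod p)
      simp only [map_add, map_pow, map_sub, map_mul, map_one, map_ofNat,
        RatFunc.algebraMap_X]
      linear_combination h
    exact main_aux hp2 n hpoly
  · rintro ⟨a, b, rfl⟩
    show (1+t)^(p^a + p^b) + (1-t)^(p^a + p^b) - 2 * t^(p^a + p^b) = 2
    rw [pow_add, pow_add, pow_add, add_pow_char_pow, add_pow_char_pow,
      sub_pow_char_pow, sub_pow_char_pow]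
    ring
end

section
/- Let p be a prime and K = F_p(t). Define Φ: G_m^2 → G_m^2 by Φ(x,y) = (t^{p²-1}·x, (1-t)^{p²-1}·y), let V be the curve tx + (1-t)y = 1, and α = (1,1). Then the set of n ∈ ℕ₀ with Φ^n(α) ∈ V equals { (p^{2n} - 1)/(p² - 1) : n ∈ ℕ₀ }. -/
open Polynomial

lemma keyPoly (p : ℕ) [hp : Fact p.Prime] (k : ℕ) (hk : 1 ≤ k)
    (h : (X : (ZMod p)[X]) ^ k + (1 - X) ^ k = 1) : ∃ j, k = p ^ j := by
  set j := k.factorization p with hj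
  set m := k / p ^ j with hmdef
  have hmk : p ^ j * m = k := Nat.ordProj_mul_ordCompl_eq_self k p
  have hpm : ¬ p ∣ m := Nat.not_dvd_ordCompl hp.out (by omega)
  have hm1 : 1 ≤ m := Nat.ordCompl_pos p (by omega)
  have h2 : ((X : (ZMod p)[X]) ^ m + (1 - X) ^ m) ^ (p ^ j) = 1 := by
    rw [add_pow_char_pow, ← pow_mul, ← pow_mul, mul_comm m (p ^ j), hmk]
    exact h
  have h3 : (X : (ZMod p)[X]) ^ m + (1 - X) ^ m = 1 := by
    have h4 : (((X : (ZMod p)[X]) ^ m + (1 - X) ^ m) - 1) ^ (p ^ j) = 0 := by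
      rw [sub_pow_char_pow, h2, one_pow, sub_self]
    have h5 := pow_eq_zero_iff (n := p ^ j) (pow_ne_zero j hp.out.pos.ne') |>.mp h4
    exact sub_eq_zero.mp h5
  have hm : m = 1 := by
    by_contra hm
    have hm2 : 2 ≤ m := by omega
    have hd := congrArg derivative h3
    simp only [derivative_add, derivative_X_pow, derivative_pow, derivative_sub,
      derivative_one, derivative_X, zero_sub, mul_neg_one, mul_neg] at hd
    have hC : (m : ZMod p) ≠ 0 := by
      simpa [ZMod.natCast_eq_zero_iff] using hpm
    have heq : (X : (ZMod p)[X]) ^ (m-1) = (1 - X) ^ (m-1) := by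
      have : C (m : ZMod p) * ((X : (ZMod p)[X]) ^ (m-1) - (1 - X) ^ (m-1)) = 0 := by
        rw [mul_sub]; linear_combination hd
      rcases mul_eq_zero.mp this with h | h
      · exact absurd (by exact_mod_cast (Polynomial.C_eq_zero.mp h)) hC
      · linear_combination h
    have := congrArg (Polynomial.eval 0) heq
    simp [zero_pow (by omega : m - 1 ≠ 0)] at this
  exact ⟨j, by rw [← hmk, hm, mul_one]⟩

lemma parity_lemma (p : ℕ) (hp : 2 ≤ p) (n j : ℕ) (h : (p ^ 2 - 1) * n + 1 = p ^ j) :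
    ∃ a, j = 2 * a := by
  rcases Nat.even_or_odd j with ⟨a, ha⟩ | ⟨a, ha⟩
  · exact ⟨a, by omega⟩
  · exfalso
    set M := p ^ 2 - 1 with hM
    have hM1 : 1 ≤ p ^ 2 := Nat.one_le_two_pow.trans (Nat.pow_le_pow_left hp 2)
    have hpj : 1 ≤ p ^ j := Nat.one_le_pow j p (by omega)
    have h2 : (1 : ℕ) ≡ p ^ 2 [MOD M] := (Nat.modEq_iff_dvd' hM1).mpr dvd_rfl
    have h3 : (1 : ℕ) ≡ p ^ (2 * a) [MOD M] := by
      calc (1:ℕ) = 1 ^ a := (one_pow a).symm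
        _ ≡ (p ^ 2) ^ a [MOD M] := h2.pow a
        _ = p ^ (2 * a) := by rw [← pow_mul]
    have h4 : (p : ℕ) ≡ p ^ j [MOD M] := by
      calc (p:ℕ) = p * 1 := (mul_one p).symm
        _ ≡ p * p ^ (2 * a) [MOD M] := h3.mul_left p
        _ = p ^ (2 * a + 1) := by rw [← pow_succ']
        _ = p ^ j := by rw [ha]
    have h5 : (1 : ℕ) ≡ p ^ j [MOD M] := by
      refine (Nat.modEq_iff_dvd' hpj).mpr ⟨n, ?_⟩
      exact Nat.sub_eq_of_eq_add (by omega)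
    have h6 : (1 : ℕ) ≡ p [MOD M] := h5.trans h4.symm
    have h7 : M ∣ p - 1 := (Nat.modEq_iff_dvd' (by omega)).mp h6
    have h8 : M ≤ p - 1 := Nat.le_of_dvd (by omega) h7
    have hpp : p ^ 2 = p * p := sq p
    have : 2 * p ≤ p * p := Nat.mul_le_mul_right p hp
    omega

noncomputable instance ratFuncCharP (p : ℕ) [Fact p.Prime] : CharP (RatFunc (ZMod p)) p :=
  charP_of_injective_algebraMap
    (IsFractionRing.injective (Polynomial (ZMod p)) (RatFunc (ZMod p))) p


/-- In `K = 𝔽_p(t)`, for `Φ(x,y) = (t^{p²-1}·x, (1-t)^{p²-1}·y)`,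
the curve `V : t·x + (1-t)·y = 1` and `α = (1,1)`, the return set
`{n : Φ^n(α) ∈ V}` equals `{(p^{2n} - 1)/(p² - 1) : n ∈ ℕ₀}` (the membership
`m = (p^{2n}-1)/(p²-1)` is expressed as `m·(p²-1) = p^{2n} - 1`). -/
theorem stmt1 (p : ℕ) [Fact p.Prime]
    (t : RatFunc (ZMod p)) (ht : t = RatFunc.X)
    (Φ : RatFunc (ZMod p) × RatFunc (ZMod p) → RatFunc (ZMod p) × RatFunc (ZMod p))
    (hΦ : ∀ w, Φ w = (t ^ (p ^ 2 - 1) * w.1, (1 - t) ^ (p ^ 2 - 1) * w.2))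
    (V : Set (RatFunc (ZMod p) × RatFunc (ZMod p)))
    (hV : V = {w | t * w.1 + (1 - t) * w.2 = 1})
    (α : RatFunc (ZMod p) × RatFunc (ZMod p)) (hα : α = (1, 1)) :
    {n : ℕ | Φ^[n] α ∈ V} = {m : ℕ | ∃ n : ℕ, m * (p ^ 2 - 1) = p ^ (2 * n) - 1} := by
  have hp2 : 2 ≤ p := (Fact.out : p.Prime).two_le
  have hiter : ∀ n : ℕ, Φ^[n] α = (t ^ ((p ^ 2 - 1) * n), (1 - t) ^ ((p ^ 2 - 1) * n)) := by
    intro n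
    induction n with
    | zero => simp [hα]
    | succ n ih =>
      rw [Function.iterate_succ_apply', ih, hΦ]
      simp only [Prod.mk.injEq]
      constructor <;> · rw [← pow_add]; ring_nf
  ext n
  simp only [Set.mem_setOf_eq, hiter, hV, Set.mem_setOf_eq]
  have hcond : (t * t ^ ((p ^ 2 - 1) * n) + (1 - t) * (1 - t) ^ ((p ^ 2 - 1) * n) = 1) ↔
      (t ^ ((p ^ 2 - 1) * n + 1) + (1 - t) ^ ((p ^ 2 - 1) * n + 1) = 1) := by
    rw [pow_succ, pow_succ]; constructor <;> intro h <;> linear_combination h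
  rw [hcond]
  set k := (p ^ 2 - 1) * n + 1 with hkdef
  constructor
  · intro h
    have hpoly : (X : (ZMod p)[X]) ^ k + (1 - X) ^ k = 1 := by
      apply IsFractionRing.injective (Polynomial (ZMod p)) (RatFunc (ZMod p))
      push_cast [map_add, map_pow, map_sub, map_one, RatFunc.algebraMap_X]
      rw [← ht]
      simpa using h
    obtain ⟨j, hj⟩ := keyPoly p k (by omega) hpoly
    obtain ⟨a, ha⟩ := parity_lemma p hp2 n j (by omega)
    refine ⟨a, ?_⟩
    rw [mul_comm]
    have hpa : p ^ (2 * a) = (p ^ 2 - 1) * n + 1 := by rw [← ha, ← hj]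
    exact (Nat.sub_eq_of_eq_add hpa).symm
  · rintro ⟨a, ha⟩
    have hpa : 1 ≤ p ^ (2 * a) := Nat.one_le_pow _ p (by omega)
    have hk : k = p ^ (2 * a) := by
      have : n * (p ^ 2 - 1) = (p ^ 2 - 1) * n := mul_comm _ _
      omega
    rw [hk, ← add_pow_char_pow, add_sub_cancel, one_pow]
end

section
/- Let p be a prime, and let m, ℓ ∈ ℕ₀ with m ≥ 1, and a, b ∈ ℚ, k ∈ ℕ₀. Then the intersection of the arithmetic progression {m·j + ℓ : j ∈ ℕ₀} with the p-arithmetic sequence {a·p^{k·n} + b : n ∈ ℕ₀} is a finite union of p-arithmetic sequences, where a p-arithmetic sequence is any set of the form {c·p^{k'·n} + d : n ∈ ℕ₀} for some c, d ∈ ℚ and k' ∈ ℕ₀. -/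
/-- A `p`-arithmetic sequence: a subset of `ℚ` of the form
`{a·p^{kn} + b : n ∈ ℕ₀}` for some `a, b ∈ ℚ` and `k ∈ ℕ₀`. -/
def IsPArithSeq (p : ℕ) (S : Set ℚ) : Prop :=
  ∃ (a b : ℚ) (k : ℕ), S = {x : ℚ | ∃ n : ℕ, x = a * (p : ℚ) ^ (k * n) + b}

/-- A finite union of `p`-arithmetic sequences. -/
def IsFinUnionPArith (p : ℕ) (S : Set ℚ) : Prop :=
  ∃ (M : ℕ) (f : Fin M → Set ℚ), (∀ i, IsPArithSeq p (f i)) ∧ S = ⋃ i, f i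

/-!
Put `x n = a p^{kn} + b = a r^n + b` with `r = p^k`. Then `x n` lies in the progression iff
`y n = (x n - ℓ) / m`, again of the form `α r^n + β`, is a natural number, i.e. an integer that
is nonnegative. Clearing denominators, integrality of `y n` depends only on `r^n` modulo a fixed
integer, and powers in the finite monoid `ZMod d` are eventually periodic by pigeonhole; the sign
of `y n` is eventually constant, since `r^n` is eventually constant or tends to infinity. Hence
the set of indices `n` with `x n` in the progression is eventually periodic, so it is a finite
union of progressions `{c + q t : t ∈ ℕ₀}` (with `q = 0` for the finitely many exceptional
indices), and `n ↦ x n` maps each of these onto a `p`-arithmetic sequence.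
-/

open Filter Function Set

theorem IsFinUnionPArith.biUnion {p : ℕ} {ι : Type*} {S : Set ι} (hS : S.Finite)
    {F : ι → Set ℚ} (hF : ∀ i ∈ S, IsPArithSeq p (F i)) :
    IsFinUnionPArith p (⋃ i ∈ S, F i) := by
  obtain ⟨M, f, -, rfl⟩ := hS.fin_param
  exact ⟨M, F ∘ f, fun i => hF _ (mem_range_self i), biUnion_range⟩

theorem isPArithSeq_image_progression (p : ℕ) (a b : ℚ) (k c q : ℕ) :
    IsPArithSeq p ((fun n => a * (p : ℚ) ^ (k * n) + b) '' range fun t => c + q * t) := by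
  refine ⟨a * (p : ℚ) ^ (k * c), b, k * q, ?_⟩
  ext x
  simp [mul_add, pow_add, mul_assoc, eq_comm]

def EventuallyPeriodic {α : Type*} (f : ℕ → α) : Prop :=
  ∃ q, 0 < q ∧ ∀ᶠ n in atTop, f (n + q) = f n

namespace EventuallyPeriodic

variable {α β γ : Type*} {f : ℕ → α}

theorem comp (hf : EventuallyPeriodic f) (g : α → β) : EventuallyPeriodic (g ∘ f) := by
  obtain ⟨q, hq, h⟩ := hf
  exact ⟨q, hq, h.mono fun n hn => congrArg g hn⟩

theorem comp₂_eventuallyConst (hf : EventuallyPeriodic f) {g : ℕ → β}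
    (hg : EventuallyConst g atTop) (op : α → β → γ) :
    EventuallyPeriodic fun n => op (f n) (g n) := by
  obtain ⟨q, hq, h⟩ := hf
  obtain ⟨N, hN⟩ := eventuallyConst_atTop.1 hg
  refine ⟨q, hq, ?_⟩
  filter_upwards [h, eventually_ge_atTop N] with n hn hNn
  rw [hn, hN n hNn, hN (n + q) (by omega)]

theorem exists_finite_eq_biUnion_progressions {T : Set ℕ} (hT : EventuallyPeriodic (· ∈ T)) :
    ∃ S : Set (ℕ × ℕ), S.Finite ∧ T = ⋃ x ∈ S, range fun t => x.1 + x.2 * t := by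
  obtain ⟨q, hq, h⟩ := hT
  obtain ⟨N, hN⟩ := eventually_atTop.1 h
  have hper : Periodic (fun t => N + t ∈ T) q := fun t => by
    simpa only [add_assoc] using hN (N + t) (by omega)
  refine ⟨(·, 0) '' (T ∩ Iio N) ∪ (fun c => (N + c, q)) '' ((N + ·) ⁻¹' T ∩ Iio q),
    (((finite_Iio N).inter_of_right T).image _).union
      (((finite_Iio q).inter_of_right _).image _), ?_⟩
  ext n
  simp only [mem_iUnion, mem_union, mem_image, mem_inter_iff, mem_preimage, mem_Iio, mem_range]
  constructor
  · intro hn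
    rcases lt_or_ge n N with hlt | hge
    · exact ⟨(n, 0), Or.inl ⟨n, ⟨hn, hlt⟩, rfl⟩, 0, by simp⟩
    · refine ⟨(N + (n - N) % q, q), Or.inr ⟨(n - N) % q, ⟨?_, Nat.mod_lt _ hq⟩, rfl⟩,
        (n - N) / q, by have hdiv := Nat.mod_add_div (n - N) q; simp only; omega⟩
      have hres := hper.map_mod_nat (n - N)
      simp only [eq_iff_iff] at hres
      exact hres.2 (by rwa [Nat.add_sub_cancel' hge])
  · rintro ⟨x, (⟨c, ⟨hc, -⟩, rfl⟩ | ⟨c, ⟨hc, -⟩, rfl⟩), t, rfl⟩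
    · simpa using hc
    · have hshift := hper.nat_mul t c
      simp only [eq_iff_iff] at hshift
      simpa only [add_assoc, mul_comm q t, Nat.cast_id] using hshift.2 hc

end EventuallyPeriodic

theorem eventuallyPeriodic_pow {M : Type*} [Monoid M] [Finite M] (u : M) :
    EventuallyPeriodic (u ^ · : ℕ → M) := by
  obtain ⟨i, j, hne, hij⟩ := Finite.exists_ne_map_eq_of_infinite (u ^ · : ℕ → M)
  wlog hlt : i < j generalizing i j
  · exact this j i hne.symm hij.symm (by omega)
  refine ⟨j - i, by omega, eventually_atTop.2 ⟨i, fun n hn => ?_⟩⟩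
  calc u ^ (n + (j - i)) = u ^ (n - i) * u ^ j := by rw [← pow_add]; congr 1; omega
    _ = u ^ n := by rw [← hij, ← pow_add]; congr 1; omega

theorem eventuallyConst_nonneg_mul_pow_add (α β : ℚ) (r : ℕ) :
    EventuallyConst (fun n => 0 ≤ α * (r : ℚ) ^ n + β) atTop := by
  rcases le_or_gt r 1 with hr | hr
  · have hpow : EventuallyConst (fun n => (r : ℚ) ^ n) atTop := by
      interval_cases r
      · exact eventuallyConst_atTop.2 ⟨1, fun n hn => by simp [zero_pow (by omega : n ≠ 0)]⟩
      · simp only [Nat.cast_one, one_pow]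
        exact .const 1
    exact hpow.comp fun y => 0 ≤ α * y + β
  have hpow : Tendsto (fun n => (r : ℚ) ^ n) atTop atTop :=
    tendsto_pow_atTop_atTop_of_one_lt (by exact_mod_cast hr)
  rcases lt_trichotomy α 0 with hα | rfl | hα
  · refine eventuallyConst_pred.2 (Or.inr ?_)
    filter_upwards [(tendsto_atBot_add_const_right _ β
      (hpow.const_mul_atTop_of_neg hα)).eventually_lt_atBot 0] with n hn
    exact not_le.2 hn
  · simp only [zero_mul, zero_add]
    exact .const _
  · exact eventuallyConst_pred.2 <| Or.inl <|
      (tendsto_atTop_add_const_right _ β (hpow.const_mul_atTop hα)).eventually_ge_atTop 0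

theorem mem_range_intCast_iff_dvd {x : ℚ} {d : ℕ} {N : ℤ} (hd : d ≠ 0) (hx : d * x = N) :
    x ∈ range ((↑) : ℤ → ℚ) ↔ (d : ℤ) ∣ N := by
  constructor
  · rintro ⟨j, rfl⟩
    exact ⟨j, by exact_mod_cast hx.symm⟩
  · rintro ⟨c, rfl⟩
    push_cast at hx
    exact ⟨c, (mul_left_cancel₀ (by exact_mod_cast hd) hx).symm⟩

theorem eventuallyPeriodic_mem_range_intCast (α β : ℚ) (r : ℕ) :
    EventuallyPeriodic fun n => α * (r : ℚ) ^ n + β ∈ range ((↑) : ℤ → ℚ) := by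
  set d := α.den * β.den
  have hd : d ≠ 0 := by positivity
  have : NeZero d := ⟨hd⟩
  set A : ℤ := α.num * β.den
  set B : ℤ := β.num * α.den
  have hscale (n : ℕ) : d * (α * (r : ℚ) ^ n + β) = ((A * r ^ n + B : ℤ) : ℚ) := by
    simp only [d, A, B]
    push_cast
    linear_combination ((r : ℚ) ^ n * β.den) * Rat.mul_den_eq_num α
      + (α.den : ℚ) * Rat.mul_den_eq_num β
  have hmod : (fun n => α * (r : ℚ) ^ n + β ∈ range ((↑) : ℤ → ℚ))
      = (fun y : ZMod d => (A : ZMod d) * y + B = 0) ∘ ((r : ZMod d) ^ ·) := by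
    funext n
    rw [comp_apply, mem_range_intCast_iff_dvd hd (hscale n),
      ← ZMod.intCast_zmod_eq_zero_iff_dvd]
    push_cast
    rfl
  rw [hmod]
  exact (eventuallyPeriodic_pow _).comp _

theorem mem_range_natCast_iff {x : ℚ} :
    x ∈ range ((↑) : ℕ → ℚ) ↔ x ∈ range ((↑) : ℤ → ℚ) ∧ 0 ≤ x := by
  constructor
  · rintro ⟨n, rfl⟩
    exact ⟨⟨n, rfl⟩, n.cast_nonneg⟩
  · rintro ⟨⟨z, rfl⟩, hz⟩
    exact ⟨z.toNat, by rw [← Int.cast_natCast, Int.toNat_of_nonneg (by exact_mod_cast hz)]⟩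

theorem eventuallyPeriodic_mem_range_natCast (α β : ℚ) (r : ℕ) :
    EventuallyPeriodic fun n => α * (r : ℚ) ^ n + β ∈ range ((↑) : ℕ → ℚ) := by
  simp only [mem_range_natCast_iff]
  exact (eventuallyPeriodic_mem_range_intCast α β r).comp₂_eventuallyConst
    (eventuallyConst_nonneg_mul_pow_add α β r) (· ∧ ·)

theorem eventuallyPeriodic_mem_progression {m : ℕ} (hm : m ≠ 0) (ℓ : ℕ) (α β : ℚ) (r : ℕ) :
    EventuallyPeriodic fun n => α * (r : ℚ) ^ n + β ∈ {x : ℚ | ∃ j : ℕ, x = m * j + ℓ} := by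
  have hm' : (m : ℚ) ≠ 0 := by exact_mod_cast hm
  have hmem (x : ℚ) :
      x ∈ {x : ℚ | ∃ j : ℕ, x = m * j + ℓ} ↔ (x - ℓ) / m ∈ range ((↑) : ℕ → ℚ) := by
    simp only [mem_ofPred_eq, mem_range, eq_div_iff hm']
    exact exists_congr fun j => ⟨fun h => by rw [h]; ring, fun h => by linear_combination -h⟩
  have hshift (n : ℕ) : (α * (r : ℚ) ^ n + β - ℓ) / m = α / m * r ^ n + (β - ℓ) / m := by
    field_simp
    ring
  simp only [hmem, hshift]
  exact eventuallyPeriodic_mem_range_natCast _ _ r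

theorem stmt3_general (p : ℕ) (m ℓ : ℕ) (hm : 1 ≤ m) (a b : ℚ) (k : ℕ) :
    IsFinUnionPArith p
      ({x : ℚ | ∃ j : ℕ, x = (m : ℚ) * j + ℓ} ∩
        {x : ℚ | ∃ n : ℕ, x = a * (p : ℚ) ^ (k * n) + b}) := by
  set v : ℕ → ℚ := fun n => a * (p : ℚ) ^ (k * n) + b
  have hv : v = fun n => a * ((p ^ k : ℕ) : ℚ) ^ n + b := by
    funext n
    simp [v, pow_mul]
  have hrange : {x : ℚ | ∃ n : ℕ, x = v n} = range v := by
    ext x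
    simp [eq_comm]
  obtain ⟨S, hS, hT⟩ := EventuallyPeriodic.exists_finite_eq_biUnion_progressions
    (T := v ⁻¹' {x : ℚ | ∃ j : ℕ, x = m * j + ℓ})
    (by rw [hv]; exact eventuallyPeriodic_mem_progression (by omega) ℓ a b _)
  rw [hrange, ← image_preimage_eq_inter_range, hT, image_iUnion₂]
  exact IsFinUnionPArith.biUnion hS fun x _ => isPArithSeq_image_progression p a b k x.1 x.2

/-- The intersection of an arithmetic progression `{m·j + ℓ : j ∈ ℕ₀}`
(with `m ≥ 1`) with a `p`-arithmetic sequence `{a·p^{kn} + b : n ∈ ℕ₀}` is a finite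
union of `p`-arithmetic sequences. -/
theorem stmt3 (p : ℕ) (hp : p.Prime) (m ℓ : ℕ) (hm : 1 ≤ m) (a b : ℚ) (k : ℕ) :
    IsFinUnionPArith p
      ({x : ℚ | ∃ j : ℕ, x = (m : ℚ) * j + ℓ} ∩
        {x : ℚ | ∃ n : ℕ, x = a * (p : ℚ) ^ (k * n) + b}) :=
  stmt3_general p m ℓ hm a b k
end

section
/- Let p be a prime. The intersection of any two p-arithmetic sequences is a finite union of p-arithmetic sequences. -/
/-!
If the offsets differ, `b₂ - b₁ = (x - b₁) - (x - b₂)` forces one of `x - b₁`, `x - b₂` to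
have `p`-adic valuation at most that of `b₂ - b₁`, while the valuation of `a p^{kn}` grows
with `n`; so the intersection is finite. If the offsets agree, `a₁ p^{k₁n} = a₂ p^{k₂m}`
determines `k₁ n` modulo `lcm k₁ k₂` once one solution is known, so starting from the least
common term the intersection is the `p`-arithmetic sequence with step `p^{lcm k₁ k₂}`.
-/

def pArithSeq (p : ℕ) (a b : ℚ) (k : ℕ) : Set ℚ :=
  {x : ℚ | ∃ n : ℕ, x = a * (p : ℚ) ^ (k * n) + b}

theorem isPArithSeq_iff {p : ℕ} {S : Set ℚ} :
    IsPArithSeq p S ↔ ∃ (a b : ℚ) (k : ℕ), S = pArithSeq p a b k :=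
  Iff.rfl

theorem pArithSeq_subsingleton {p : ℕ} {a b : ℚ} {k : ℕ} (h : a = 0 ∨ k = 0) :
    (pArithSeq p a b k).Subsingleton := by
  rintro _ ⟨n, rfl⟩ _ ⟨m, rfl⟩
  rcases h with rfl | rfl <;> simp

theorem isPArithSeq_singleton (p : ℕ) (x : ℚ) : IsPArithSeq p {x} :=
  ⟨0, x, 0, by ext; simp⟩

theorem IsPArithSeq.isFinUnionPArith {p : ℕ} {S : Set ℚ} (h : IsPArithSeq p S) :
    IsFinUnionPArith p S :=
  ⟨1, fun _ => S, fun _ => h, (Set.iUnion_const S).symm⟩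

theorem isFinUnionPArith_of_finite (p : ℕ) {S : Set ℚ} (h : S.Finite) :
    IsFinUnionPArith p S := by
  obtain ⟨M, f, -, rfl⟩ := h.fin_param
  exact ⟨M, fun i => {f i}, fun i => isPArithSeq_singleton p (f i),
    (Set.iUnion_singleton_eq_range f).symm⟩

section Valuation

variable {p : ℕ} [hp : Fact p.Prime]

theorem padicValRat_mul_prime_pow {a : ℚ} (ha : a ≠ 0) (j : ℕ) :
    padicValRat p (a * (p : ℚ) ^ j) = padicValRat p a + j := by
  rw [padicValRat.mul ha (pow_ne_zero _ (by exact_mod_cast hp.out.ne_zero)),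
    padicValRat.pow, padicValRat.self hp.out.one_lt, mul_one]

theorem finite_pArithSeq_padicValRat_sub_le (a b : ℚ) (k : ℕ) (V : ℤ) :
    {x ∈ pArithSeq p a b k | padicValRat p (x - b) ≤ V}.Finite := by
  by_cases hdeg : a = 0 ∨ k = 0
  · exact (pArithSeq_subsingleton hdeg).finite.subset fun x hx => hx.1
  push Not at hdeg
  obtain ⟨ha, hk⟩ := hdeg
  refine ((Set.finite_Iic (V - padicValRat p a).toNat).image
    fun n => a * (p : ℚ) ^ (k * n) + b).subset ?_
  rintro _ ⟨⟨n, rfl⟩, hV⟩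
  rw [add_sub_cancel_right, padicValRat_mul_prime_pow ha] at hV
  have : n ≤ k * n := Nat.le_mul_of_pos_left n (Nat.pos_of_ne_zero hk)
  exact ⟨n, by simp only [Set.mem_Iic]; omega, rfl⟩

theorem finite_pArithSeq_inter_of_ne {a₁ a₂ b₁ b₂ : ℚ} (k₁ k₂ : ℕ) (hb : b₁ ≠ b₂) :
    (pArithSeq p a₁ b₁ k₁ ∩ pArithSeq p a₂ b₂ k₂).Finite := by
  set V := padicValRat p (b₂ - b₁)
  refine ((finite_pArithSeq_padicValRat_sub_le (p := p) a₁ b₁ k₁ V).union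
    (finite_pArithSeq_padicValRat_sub_le (p := p) a₂ b₂ k₂ V)).subset ?_
  rintro x ⟨hx₁, hx₂⟩
  have hsum : (x - b₁) + -(x - b₂) ≠ 0 := by
    rw [neg_sub, sub_add_sub_cancel']; exact sub_ne_zero.mpr hb.symm
  have hmin := padicValRat.min_le_padicValRat_add (p := p) hsum
  rw [padicValRat.neg, neg_sub, sub_add_sub_cancel'] at hmin
  rcases min_le_iff.mp hmin with h | h
  · exact Or.inl ⟨hx₁, h⟩
  · exact Or.inr ⟨hx₂, h⟩

end Valuation

section SameOffset

variable {p : ℕ} {a₁ a₂ b : ℚ} {k₁ k₂ : ℕ}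

theorem pArithSeq_inter_eq_of_minimal (hp : 1 < p) (ha₁ : a₁ ≠ 0) {n₀ m₀ : ℕ}
    (h₀ : a₁ * (p : ℚ) ^ (k₁ * n₀) = a₂ * (p : ℚ) ^ (k₂ * m₀))
    (hmin : ∀ n m : ℕ, a₁ * (p : ℚ) ^ (k₁ * n) = a₂ * (p : ℚ) ^ (k₂ * m) → n₀ ≤ n) :
    pArithSeq p a₁ b k₁ ∩ pArithSeq p a₂ b k₂ =
      pArithSeq p (a₁ * (p : ℚ) ^ (k₁ * n₀)) b (Nat.lcm k₁ k₂) := by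
  have hpow_inj : Function.Injective fun e : ℕ => (p : ℚ) ^ e :=
    (pow_right_strictMono₀ (by exact_mod_cast hp)).injective
  ext x
  constructor
  · rintro ⟨⟨n, rfl⟩, ⟨m, hm⟩⟩
    have hnm : a₁ * (p : ℚ) ^ (k₁ * n) = a₂ * (p : ℚ) ^ (k₂ * m) := by linarith
    have hn : n₀ ≤ n := hmin n m hnm
    have ha₂ : a₂ ≠ 0 := by
      rintro rfl
      simp [ha₁, (by positivity : (p : ℚ) ≠ 0)] at h₀
    -- cross-multiply the two solutions and cancel `a₁ a₂`
    have hexp : k₁ * n + k₂ * m₀ = k₂ * m + k₁ * n₀ := by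
      apply hpow_inj
      apply mul_left_cancel₀ (mul_ne_zero ha₁ ha₂)
      simp only [pow_add]
      linear_combination
        (a₂ * (p : ℚ) ^ (k₂ * m₀)) * hnm - (a₂ * (p : ℚ) ^ (k₂ * m)) * h₀
    have hkn : k₁ * n = k₁ * (n - n₀) + k₁ * n₀ := by
      rw [← mul_add, Nat.sub_add_cancel hn]
    obtain ⟨s, hs⟩ : Nat.lcm k₁ k₂ ∣ k₁ * (n - n₀) := by
      have hsplit : k₂ * m₀ + k₁ * (n - n₀) = k₂ * m := by linarith
      refine Nat.lcm_dvd (dvd_mul_right _ _) ?_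
      exact (Nat.dvd_add_right (dvd_mul_right k₂ m₀)).mp (hsplit ▸ dvd_mul_right k₂ m)
    refine ⟨s, ?_⟩
    rw [hkn, ← hs, pow_add]
    ring
  · rintro ⟨s, rfl⟩
    have hstep {k : ℕ} (hk : k ∣ Nat.lcm k₁ k₂) (j : ℕ) :
        (p : ℚ) ^ (k * (j + Nat.lcm k₁ k₂ / k * s)) =
          (p : ℚ) ^ (k * j) * (p : ℚ) ^ (Nat.lcm k₁ k₂ * s) := by
      rw [mul_add, ← mul_assoc, Nat.mul_div_cancel' hk, pow_add]
    refine ⟨⟨n₀ + Nat.lcm k₁ k₂ / k₁ * s, ?_⟩, ⟨m₀ + Nat.lcm k₁ k₂ / k₂ * s, ?_⟩⟩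
    · rw [hstep (Nat.dvd_lcm_left k₁ k₂), mul_assoc]
    · rw [hstep (Nat.dvd_lcm_right k₁ k₂), h₀, mul_assoc]

theorem pArithSeq_inter_eq_empty_or_isPArithSeq (hp : 1 < p) :
    pArithSeq p a₁ b k₁ ∩ pArithSeq p a₂ b k₂ = ∅ ∨
      IsPArithSeq p (pArithSeq p a₁ b k₁ ∩ pArithSeq p a₂ b k₂) := by
  classical
  rcases eq_or_ne a₁ 0 with rfl | ha₁
  · have hsub := (pArithSeq_subsingleton (p := p) (b := b) (k := k₁) (Or.inl rfl)).anti
      (Set.inter_subset_left (t := pArithSeq p a₂ b k₂))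
    rcases hsub.eq_empty_or_singleton with h | ⟨x, h⟩
    · exact Or.inl h
    · exact Or.inr (h ▸ isPArithSeq_singleton p x)
  by_cases hcommon : ∃ n m : ℕ, a₁ * (p : ℚ) ^ (k₁ * n) = a₂ * (p : ℚ) ^ (k₂ * m)
  · obtain ⟨m₀, h₀⟩ := Nat.find_spec hcommon
    exact Or.inr ⟨_, _, _, pArithSeq_inter_eq_of_minimal hp ha₁ h₀
      fun n m h => Nat.find_min' hcommon ⟨m, h⟩⟩
  · refine Or.inl (Set.eq_empty_iff_forall_notMem.mpr ?_)
    rintro _ ⟨⟨n, rfl⟩, m, hm⟩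
    exact hcommon ⟨n, m, add_right_cancel hm⟩

end SameOffset

/-- For a prime `p`, the intersection of any two `p`-arithmetic
sequences is a finite union of `p`-arithmetic sequences. -/
theorem stmt8 (p : ℕ) (hp : p.Prime) (S₁ S₂ : Set ℚ)
    (h₁ : IsPArithSeq p S₁) (h₂ : IsPArithSeq p S₂) :
    IsFinUnionPArith p (S₁ ∩ S₂) := by
  have : Fact p.Prime := ⟨hp⟩
  obtain ⟨a₁, b₁, k₁, rfl⟩ := isPArithSeq_iff.mp h₁
  obtain ⟨a₂, b₂, k₂, rfl⟩ := isPArithSeq_iff.mp h₂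
  rcases eq_or_ne b₁ b₂ with rfl | hb
  · rcases pArithSeq_inter_eq_empty_or_isPArithSeq hp.one_lt with h | h
    · exact h ▸ isFinUnionPArith_of_finite p Set.finite_empty
    · exact h.isFinUnionPArith
  · exact isFinUnionPArith_of_finite p (finite_pArithSeq_inter_of_ne k₁ k₂ hb)
end

section
/- Let X be a quasiprojective variety over an algebraically closed field K, Φ: X → X an endomorphism, V ⊆ X an irreducible curve, and α ∈ X(K). Define S = {n ∈ ℕ₀ : Φ^n(α) ∈ V(K)}. If S contains an infinite arithmetic progression, then S is a finite union of arithmetic progressions. -/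
/-!
If the orbit of `α` is preperiodic, membership of `Φ^[n] α` in `V` is eventually periodic in `n`.
Otherwise the points `Φ^[m k + ℓ] α` of the given progression are pairwise distinct, so they form
an infinite subset of the curve `V`, hence are dense in it; they are permuted forward by `Φ^[m]`,
so by continuity `Φ^[m]` maps `V` into itself. In both cases `S` is closed under `n ↦ n + p` from
some point on, and such a set splits, residue class by residue class, into finitely many
progressions and finitely many singletons.
-/

/-- An arithmetic progression of natural numbers `{m·k + ℓ : k ∈ ℕ₀}`. -/
def IsAPNat (S : Set ℕ) : Prop :=
  ∃ m ℓ : ℕ, S = {n : ℕ | ∃ j : ℕ, n = m * j + ℓ}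

open Set Function

def IsFinUnionAP (S : Set ℕ) : Prop :=
  ∃ 𝒜 : Set (Set ℕ), 𝒜.Finite ∧ (∀ t ∈ 𝒜, IsAPNat t) ∧ ⋃₀ 𝒜 = S

namespace IsFinUnionAP

variable {S T : Set ℕ}

theorem exists_fin (h : IsFinUnionAP S) :
    ∃ (M : ℕ) (f : Fin M → Set ℕ), (∀ i, IsAPNat (f i)) ∧ S = ⋃ i, f i := by
  obtain ⟨𝒜, h𝒜, hAP, rfl⟩ := h
  obtain ⟨M, f, hf⟩ := h𝒜.fin_embedding
  exact ⟨M, f, fun i => hAP _ (hf ▸ mem_range_self i), by rw [← hf, sUnion_range]⟩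

theorem empty : IsFinUnionAP ∅ :=
  ⟨∅, finite_empty, by simp, sUnion_empty⟩

theorem of_isAPNat (h : IsAPNat S) : IsFinUnionAP S :=
  ⟨{S}, finite_singleton S, by simpa, sUnion_singleton S⟩

theorem union (hS : IsFinUnionAP S) (hT : IsFinUnionAP T) : IsFinUnionAP (S ∪ T) := by
  obtain ⟨𝒜, h𝒜, hA, rfl⟩ := hS
  obtain ⟨ℬ, hℬ, hB, rfl⟩ := hT
  exact ⟨𝒜 ∪ ℬ, h𝒜.union hℬ, fun t ht => ht.elim (hA t) (hB t), sUnion_union 𝒜 ℬ⟩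

theorem biUnion {ι : Type*} {s : Set ι} (hs : s.Finite) {T : ι → Set ℕ}
    (hT : ∀ i ∈ s, IsFinUnionAP (T i)) : IsFinUnionAP (⋃ i ∈ s, T i) := by
  choose! 𝒜 h𝒜 hA hU using hT
  refine ⟨⋃ i ∈ s, 𝒜 i, hs.biUnion h𝒜, ?_, ?_⟩
  · simp only [mem_iUnion]
    rintro t ⟨i, hi, ht⟩
    exact hA i hi t ht
  · simp only [sUnion_iUnion]
    exact iUnion₂_congr hU

theorem of_finite (hS : S.Finite) : IsFinUnionAP S := by
  rw [← biUnion_of_singleton S]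
  exact biUnion hS fun n _ => of_isAPNat ⟨0, n, by simp⟩

end IsFinUnionAP

theorem isAPNat_of_add_mem {T : Set ℕ} (p : ℕ) (hT : T.Nonempty) (hadd : ∀ n ∈ T, n + p ∈ T)
    (hmod : ∀ n ∈ T, ∀ n' ∈ T, n ≡ n' [MOD p]) : IsAPNat T := by
  have hmin := Nat.sInf_mem hT
  refine ⟨p, sInf T, Set.ext fun n => ⟨fun hn => ?_, ?_⟩⟩
  · have hle := Nat.sInf_le hn
    obtain ⟨j, hj⟩ := (Nat.modEq_iff_dvd' hle).mp (hmod _ hmin _ hn)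
    exact ⟨j, by omega⟩
  · rintro ⟨j, rfl⟩
    induction j with
    | zero => simpa using hmin
    | succ j ih => simpa only [Nat.mul_succ, Nat.add_right_comm] using hadd _ ih

theorem isFinUnionAP_of_add_mem {S : Set ℕ} {p a : ℕ} (hp : 0 < p)
    (hadd : ∀ n ∈ S, a ≤ n → n + p ∈ S) : IsFinUnionAP S := by
  have hsplit : S = {n ∈ S | n < a} ∪ ⋃ r ∈ Iio p, {n ∈ S | a ≤ n ∧ n % p = r} := by
    refine Subset.antisymm (fun n hn => ?_) (union_subset (sep_subset S _) (iUnion₂_subset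
      fun r _ => sep_subset S _))
    by_cases hna : n < a
    · exact Or.inl ⟨hn, hna⟩
    · exact Or.inr (mem_biUnion (Nat.mod_lt n hp) ⟨hn, by omega, rfl⟩)
  rw [hsplit]
  refine (IsFinUnionAP.of_finite ((finite_Iio a).subset fun n hn => hn.2)).union
    (IsFinUnionAP.biUnion (finite_Iio p) fun r _ => ?_)
  rcases eq_empty_or_nonempty {n ∈ S | a ≤ n ∧ n % p = r} with h | h
  · rw [h]; exact IsFinUnionAP.empty
  · refine IsFinUnionAP.of_isAPNat (isAPNat_of_add_mem p h ?_ ?_)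
    · rintro n ⟨hnS, han, rfl⟩
      exact ⟨hadd n hnS han, by omega, by simp⟩
    · rintro n ⟨-, -, rfl⟩ n' ⟨-, -, hn'⟩
      exact hn'.symm

theorem iterate_add_sub_eq_of_iterate_eq {X : Type*} {f : X → X} {x : X} {a b n : ℕ}
    (heq : f^[a] x = f^[b] x) (hab : a ≤ b) (han : a ≤ n) : f^[n + (b - a)] x = f^[n] x := by
  have hper : IsPeriodicPt f (b - a) (f^[a] x) := by
    rw [IsPeriodicPt, IsFixedPt, ← iterate_add_apply, Nat.sub_add_cancel hab, heq]
  calc f^[n + (b - a)] x = f^[b - a] (f^[n - a] (f^[a] x)) := by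
        rw [← iterate_add_apply, ← iterate_add_apply]; congr 1; omega
    _ = f^[n - a] (f^[a] x) := (hper.apply_iterate _).eq
    _ = f^[n] x := by rw [← iterate_add_apply, Nat.sub_add_cancel han]

theorem mapsTo_of_mapsTo_infinite_subset {X : Type*} [TopologicalSpace X] {g : X → X} {V T : Set X}
    (hg : Continuous g) (hVcl : IsClosed V)
    (hVcurve : ∀ W : Set X, IsClosed W → W ⊆ V → W.Infinite → W = V)
    (hTV : T ⊆ V) (hT : T.Infinite) (hgT : MapsTo g T T) : MapsTo g V V := by
  have hdense : closure T = V :=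
    hVcurve _ isClosed_closure (closure_minimal hTV hVcl) (hT.mono subset_closure)
  simpa only [hdense] using hgT.closure hg

theorem stmt10_general {X : Type*} [TopologicalSpace X] (Φ : X → X) (hΦ : Continuous Φ)
    (V : Set X) (hVcl : IsClosed V)
    (hVcurve : ∀ W : Set X, IsClosed W → W ⊆ V → W.Infinite → W = V)
    (α : X)
    (S : Set ℕ) (hS : S = {n : ℕ | Φ^[n] α ∈ V})
    (hprog : ∃ m ℓ : ℕ, 1 ≤ m ∧ ∀ j : ℕ, m * j + ℓ ∈ S) :
    ∃ (M : ℕ) (f : Fin M → Set ℕ), (∀ i, IsAPNat (f i)) ∧ S = ⋃ i, f i := by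
  subst hS
  obtain ⟨m, ℓ, hm, hAP⟩ := hprog
  suffices ∃ p a, 0 < p ∧ ∀ n, Φ^[n] α ∈ V → a ≤ n → Φ^[n + p] α ∈ V by
    obtain ⟨p, a, hp, hadd⟩ := this
    exact (isFinUnionAP_of_add_mem hp hadd).exists_fin
  by_cases horbit : Injective fun n => Φ^[n] α
  · have hprogV : MapsTo Φ^[m] V V := by
      refine mapsTo_of_mapsTo_infinite_subset (T := range fun j => Φ^[m * j + ℓ] α) (hΦ.iterate m)
        hVcl hVcurve (range_subset_iff.mpr hAP) (infinite_range_of_injective ?_) ?_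
      · exact horbit.comp fun j k h => Nat.eq_of_mul_eq_mul_left hm (by simpa using h)
      · rintro _ ⟨j, rfl⟩
        exact ⟨j + 1, by simp only [← iterate_add_apply]; ring_nf⟩
    refine ⟨m, 0, hm, fun n hn _ => ?_⟩
    simpa only [Nat.add_comm n, iterate_add_apply] using hprogV hn
  · obtain ⟨a, b, heq, hne⟩ := not_injective_iff.mp horbit
    wlog hab : a < b generalizing a b
    · exact this b a heq.symm hne.symm (by omega)
    exact ⟨b - a, a, by omega, fun n hn han => by
      rwa [iterate_add_sub_eq_of_iterate_eq heq hab.le han]⟩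

/-- Let `X` be a quasiprojective variety over an algebraically closed
field (abstracted here as a topological space carrying its Zariski topology),
`Φ : X → X` an endomorphism (a continuous self-map), `V ⊆ X` an irreducible closed
curve (closed, irreducible, and one-dimensional in the sense that every infinite
closed subset of `V` is all of `V`), and `α ∈ X`.  If
`S = {n : Φ^n(α) ∈ V}` contains an infinite arithmetic progression, then `S` is a
finite union of arithmetic progressions. -/
theorem stmt10 {X : Type*} [TopologicalSpace X] (Φ : X → X) (hΦ : Continuous Φ)
    (V : Set X) (hVcl : IsClosed V) (hVirr : IsIrreducible V)
    (hVcurve : ∀ W : Set X, IsClosed W → W ⊆ V → W.Infinite → W = V)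
    (α : X)
    (S : Set ℕ) (hS : S = {n : ℕ | Φ^[n] α ∈ V})
    (hprog : ∃ m ℓ : ℕ, 1 ≤ m ∧ ∀ j : ℕ, m * j + ℓ ∈ S) :
    ∃ (M : ℕ) (f : Fin M → Set ℕ), (∀ i, IsAPNat (f i)) ∧ S = ⋃ i, f i :=
  stmt10_general Φ hΦ V hVcl hVcurve α S hS hprog
end

section
/- Let G be an abelian group, Φ₀: G → G a group homomorphism satisfying a monic integer linear recurrence Φ₀^ℓ(x) + c_{ℓ-1}Φ₀^{ℓ-1}(x) + ... + c₀x = 0 for all x ∈ G, let y, α ∈ G, and define Φ(x) = y + Φ₀(x). Then there exist integer linear recurrence sequences {u_{i,n}} (1 ≤ i ≤ ℓ) and {v_{i,n}} (0 ≤ i ≤ ℓ-1) such that for all n ∈ ℕ₀: Φ^n(α) = Σ_{i=1}^{ℓ} u_{i,n}·(Σ_{j=0}^{i-1} Φ₀^j(y)) + Σ_{i=0}^{ℓ-1} v_{i,n}·Φ₀^i(α). -/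
/-- An integer linear recurrence sequence. -/
def IsLinRecSeq (u : ℕ → ℤ) : Prop :=
  ∃ (m : ℕ), 1 ≤ m ∧ ∃ c : ℕ → ℤ,
    ∀ n : ℕ, u (n + m) + ∑ i ∈ Finset.range m, c i * u (n + i) = 0

/-- Sequence equal to `init` on `[0, ℓ)` and satisfying the linear recurrence with
coefficients `c` afterwards. -/
def seqRec (ℓ : ℕ) (c : ℕ → ℤ) (init : ℕ → ℤ) : ℕ → ℤ
  | n =>
    if _h : n < ℓ then init n
    else -∑ k ∈ (Finset.range ℓ).attach,
      c k.1 * seqRec ℓ c init (n - ℓ + k.1)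
  decreasing_by
    have := Finset.mem_range.mp k.2; omega

lemma seqRec_lt (ℓ : ℕ) (c : ℕ → ℤ) (init : ℕ → ℤ) {n : ℕ} (h : n < ℓ) :
    seqRec ℓ c init n = init n := by
  rw [seqRec]; simp [h]

lemma seqRec_rec (ℓ : ℕ) (c : ℕ → ℤ) (init : ℕ → ℤ) (n : ℕ) :
    seqRec ℓ c init (n + ℓ) = -∑ k ∈ Finset.range ℓ, c k * seqRec ℓ c init (n + k) := by
  rw [seqRec]
  have h : ¬ (n + ℓ < ℓ) := by omega
  simp only [h, dif_neg, not_false_iff]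
  rw [← Finset.sum_attach (Finset.range ℓ) (fun k => c k * seqRec ℓ c init (n + k))]
  congr 1
  apply Finset.sum_congr rfl
  intro k _
  congr 2
  omega

/-- The fundamental solutions of the recurrence. -/
def vSeq (ℓ : ℕ) (c : ℕ → ℤ) (i : ℕ) : ℕ → ℤ :=
  seqRec ℓ c (fun n => if i = n then 1 else 0)

/-- `vSeq` extended by zero outside `[0, ℓ)` in the first index. -/
def vtSeq (ℓ : ℕ) (c : ℕ → ℤ) (j n : ℕ) : ℤ :=
  if j < ℓ then vSeq ℓ c j n else 0

/-- The coefficient sequences of the inhomogeneous part. -/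
def uSeq (ℓ : ℕ) (c : ℕ → ℤ) (i n : ℕ) : ℤ :=
  ∑ k ∈ Finset.range n, (vtSeq ℓ c i k - vtSeq ℓ c (i + 1) k)

lemma vSeq_rec (ℓ : ℕ) (c : ℕ → ℤ) (j n : ℕ) :
    vSeq ℓ c j (n + ℓ) + ∑ i ∈ Finset.range ℓ, c i * vSeq ℓ c j (n + i) = 0 := by
  simp only [vSeq]
  rw [seqRec_rec]
  ring

lemma vtSeq_rec (ℓ : ℕ) (c : ℕ → ℤ) (j n : ℕ) :
    vtSeq ℓ c j (n + ℓ) + ∑ i ∈ Finset.range ℓ, c i * vtSeq ℓ c j (n + i) = 0 := by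
  by_cases hj : j < ℓ
  · simp only [vtSeq, if_pos hj]
    exact vSeq_rec ℓ c j n
  · simp [vtSeq, hj]

lemma iter_map_combo {G : Type*} [AddCommGroup G] (Φ₀ : G →+ G) (ℓ : ℕ) (c : ℕ → ℤ)
    (g : ℕ → G) (m : ℕ) :
    (⇑Φ₀)^[m] (-∑ i ∈ Finset.range ℓ, c i • g i)
      = -∑ i ∈ Finset.range ℓ, c i • (⇑Φ₀)^[m] (g i) := by
  induction m with
  | zero => simp
  | succ m ih =>
    rw [Function.iterate_succ_apply', ih, map_neg, map_sum]
    simp only [map_zsmul, Function.iterate_succ_apply']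

/-- Every iterate of `Φ₀` is an integer linear combination of the first `ℓ` iterates,
with coefficients `vSeq`. -/
lemma rep_lemma {G : Type*} [AddCommGroup G] (ℓ : ℕ) (c : ℕ → ℤ)
    (Φ₀ : G →+ G)
    (hrec : ∀ x : G, (⇑Φ₀)^[ℓ] x + ∑ i ∈ Finset.range ℓ, c i • (⇑Φ₀)^[i] x = 0)
    (x : G) : ∀ n : ℕ, (⇑Φ₀)^[n] x = ∑ i ∈ Finset.range ℓ, vSeq ℓ c i n • (⇑Φ₀)^[i] x := by
  intro n
  induction n using Nat.strong_induction_on with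
  | _ n ih =>
    by_cases h : n < ℓ
    · have hb : ∀ i ∈ Finset.range ℓ,
          vSeq ℓ c i n • (⇑Φ₀)^[i] x = (if i = n then (1:ℤ) else 0) • (⇑Φ₀)^[i] x :=
        fun i _ => by rw [vSeq, seqRec_lt ℓ c _ h]
      rw [Finset.sum_congr rfl hb]
      simp only [ite_smul, one_smul, zero_smul]
      rw [Finset.sum_ite_eq' (Finset.range ℓ) n (fun i => (⇑Φ₀)^[i] x)]
      simp [h]
    · push_neg at h
      have hn : n = (n - ℓ) + ℓ := by omega
      have hΦℓ : (⇑Φ₀)^[ℓ] x = -∑ i ∈ Finset.range ℓ, c i • (⇑Φ₀)^[i] x :=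
        eq_neg_of_add_eq_zero_left (hrec x)
      have hv : ∀ j, vSeq ℓ c j n = -∑ i ∈ Finset.range ℓ, c i * vSeq ℓ c j (n - ℓ + i) := by
        intro j
        conv_lhs => rw [hn]
        exact seqRec_rec ℓ c _ (n - ℓ)
      calc (⇑Φ₀)^[n] x = (⇑Φ₀)^[n - ℓ] ((⇑Φ₀)^[ℓ] x) := by
            rw [← Function.iterate_add_apply, Nat.sub_add_cancel h]
        _ = -∑ i ∈ Finset.range ℓ, c i • (⇑Φ₀)^[n - ℓ + i] x := by
            rw [hΦℓ, iter_map_combo]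
            congr 1
            exact Finset.sum_congr rfl fun i _ => by rw [Function.iterate_add_apply]
        _ = -∑ i ∈ Finset.range ℓ, ∑ j ∈ Finset.range ℓ,
              c i • (vSeq ℓ c j (n - ℓ + i) • (⇑Φ₀)^[j] x) := by
            congr 1
            refine Finset.sum_congr rfl (fun i hi => ?_)
            rw [ih (n - ℓ + i) (by have := Finset.mem_range.mp hi; omega), Finset.smul_sum]
        _ = ∑ j ∈ Finset.range ℓ, -∑ i ∈ Finset.range ℓ,
              c i • (vSeq ℓ c j (n - ℓ + i) • (⇑Φ₀)^[j] x) := by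
            rw [Finset.sum_comm, Finset.sum_neg_distrib]
        _ = ∑ j ∈ Finset.range ℓ, vSeq ℓ c j n • (⇑Φ₀)^[j] x := by
            refine Finset.sum_congr rfl (fun j _ => ?_)
            rw [hv j]
            simp only [neg_smul, Finset.sum_smul, mul_smul]

/-- Partial sums of a linear recurrence sequence satisfy a linear recurrence of one
higher order. -/
lemma partialSum_rec (m : ℕ) (c : ℕ → ℤ) (d : ℕ → ℤ)
    (hd : ∀ n : ℕ, d (n + m) + ∑ i ∈ Finset.range m, c i * d (n + i) = 0) :
    ∀ n : ℕ, (∑ k ∈ Finset.range (n + (m + 1)), d k)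
      + ∑ i ∈ Finset.range (m + 1),
          ((if i = 0 then 0 else c (i - 1)) - (if i = m then 1 else c i))
            * ∑ k ∈ Finset.range (n + i), d k = 0 := by
  intro n
  set U : ℕ → ℤ := fun a => ∑ k ∈ Finset.range a, d k with hU
  show U (n + (m + 1)) + ∑ i ∈ Finset.range (m + 1),
      ((if i = 0 then 0 else c (i - 1)) - (if i = m then 1 else c i)) * U (n + i) = 0
  have hUsucc : ∀ a : ℕ, U (a + 1) = U a + d a := fun a => Finset.sum_range_succ d a
  have hA : ∑ i ∈ Finset.range (m + 1), (if i = 0 then (0:ℤ) else c (i - 1)) * U (n + i)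
      = ∑ i ∈ Finset.range m, c i * U (n + i + 1) := by
    rw [Finset.sum_range_succ']
    simp only [Nat.succ_ne_zero, if_false, Nat.add_sub_cancel, if_true, reduceIte,
      zero_mul, add_zero, ← Nat.add_assoc]
  have hB : ∑ i ∈ Finset.range (m + 1), (if i = m then (1:ℤ) else c i) * U (n + i)
      = (∑ i ∈ Finset.range m, c i * U (n + i)) + U (n + m) := by
    rw [Finset.sum_range_succ, if_pos rfl, one_mul]
    congr 1
    refine Finset.sum_congr rfl fun i hi => ?_
    rw [if_neg (Nat.ne_of_lt (Finset.mem_range.mp hi))]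
  have hsplit : ∑ i ∈ Finset.range (m + 1),
      ((if i = 0 then (0:ℤ) else c (i - 1)) - (if i = m then 1 else c i)) * U (n + i)
      = (∑ i ∈ Finset.range m, c i * U (n + i + 1))
        - ((∑ i ∈ Finset.range m, c i * U (n + i)) + U (n + m)) := by
    simp only [sub_mul]
    rw [Finset.sum_sub_distrib, hA, hB]
  rw [hsplit]
  have hC : ∑ i ∈ Finset.range m, c i * U (n + i + 1)
      = (∑ i ∈ Finset.range m, c i * U (n + i)) + ∑ i ∈ Finset.range m, c i * d (n + i) := by
    rw [← Finset.sum_add_distrib]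
    refine Finset.sum_congr rfl fun i _ => ?_
    rw [hUsucc (n + i)]; ring
  have hD : U (n + (m + 1)) = U (n + m) + d (n + m) := hUsucc (n + m)
  rw [hC, hD]
  linear_combination hd n

/-- Abel summation step. -/
lemma abel_lemma {G : Type*} [AddCommGroup G] (ℓ : ℕ) (a : ℕ → ℤ) (S : ℕ → G)
    (hS : S 0 = 0) (ha : a ℓ = 0) :
    ∑ i ∈ Finset.range ℓ, (a i - a (i + 1)) • S (i + 1)
      = ∑ i ∈ Finset.range ℓ, a i • (S (i + 1) - S i) := by
  have key : ∑ i ∈ Finset.range ℓ, a (i + 1) • S (i + 1)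
      = ∑ i ∈ Finset.range ℓ, a i • S i := by
    have h1 := Finset.sum_range_succ' (fun i => a i • S i) ℓ
    rw [Finset.sum_range_succ, ha, zero_smul, add_zero, hS, smul_zero, add_zero] at h1
    exact h1.symm
  simp only [sub_smul, smul_sub]
  rw [Finset.sum_sub_distrib, Finset.sum_sub_distrib, key]

/-- Let `G` be an abelian group, `Φ₀ : G → G` a homomorphism with
`Φ₀^ℓ + c_{ℓ-1}Φ₀^{ℓ-1} + ... + c₀·id = 0`, `y, α ∈ G` and `Φ(x) = y + Φ₀(x)`.
Then there are integer linear recurrence sequences `u_{i,n}` (`1 ≤ i ≤ ℓ`, here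
indexed by `i ∈ {0,...,ℓ-1}` with `u i` standing for `u_{i+1}`) and `v_{i,n}`
(`0 ≤ i ≤ ℓ-1`) with
`Φ^n(α) = Σ_{i=1}^{ℓ} u_{i,n}·(Σ_{j=0}^{i-1} Φ₀^j(y)) + Σ_{i=0}^{ℓ-1} v_{i,n}·Φ₀^i(α)`. -/
theorem stmt13 {G : Type*} [AddCommGroup G] (ℓ : ℕ) (hℓ : 1 ≤ ℓ) (c : ℕ → ℤ)
    (Φ₀ : G →+ G)
    (hrec : ∀ x : G, (⇑Φ₀)^[ℓ] x + ∑ i ∈ Finset.range ℓ, c i • (⇑Φ₀)^[i] x = 0)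
    (y α : G) (Φ : G → G) (hΦ : ∀ x, Φ x = y + Φ₀ x) :
    ∃ (u v : ℕ → ℕ → ℤ),
      (∀ i, i < ℓ → IsLinRecSeq (u i) ∧ IsLinRecSeq (v i)) ∧
      ∀ n : ℕ, Φ^[n] α =
        (∑ i ∈ Finset.range ℓ, u i n • (∑ j ∈ Finset.range (i + 1), (⇑Φ₀)^[j] y)) +
          ∑ i ∈ Finset.range ℓ, v i n • (⇑Φ₀)^[i] α := by
  refine ⟨uSeq ℓ c, vSeq ℓ c, ?_, ?_⟩
  · intro i _
    constructor
    · refine ⟨ℓ + 1, by omega, fun j => (if j = 0 then 0 else c (j - 1))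
        - (if j = ℓ then 1 else c j), fun n => ?_⟩
      have hd : ∀ n : ℕ, (vtSeq ℓ c i (n + ℓ) - vtSeq ℓ c (i + 1) (n + ℓ))
          + ∑ k ∈ Finset.range ℓ, c k * (vtSeq ℓ c i (n + k) - vtSeq ℓ c (i + 1) (n + k))
          = 0 := by
        intro n
        simp only [mul_sub]
        rw [Finset.sum_sub_distrib]
        linear_combination vtSeq_rec ℓ c i n - vtSeq_rec ℓ c (i + 1) n
      exact partialSum_rec ℓ c _ hd n
    · exact ⟨ℓ, hℓ, c, fun n => vSeq_rec ℓ c i n⟩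
  · -- the main identity
    have hiter : ∀ n : ℕ, Φ^[n] α
        = (∑ j ∈ Finset.range n, (⇑Φ₀)^[j] y) + (⇑Φ₀)^[n] α := by
      intro n
      induction n with
      | zero => simp
      | succ n ih =>
        rw [Function.iterate_succ_apply', ih, hΦ, map_add, map_sum,
          Finset.sum_range_succ']
        simp only [← Function.iterate_succ_apply', Function.iterate_zero_apply]
        abel
    have hy : ∀ n : ℕ, (∑ j ∈ Finset.range n, (⇑Φ₀)^[j] y)
        = ∑ i ∈ Finset.range ℓ, uSeq ℓ c i n •
            (∑ j ∈ Finset.range (i + 1), (⇑Φ₀)^[j] y) := by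
      intro n
      induction n with
      | zero => simp [uSeq]
      | succ n ih =>
        set S : ℕ → G := fun m => ∑ j ∈ Finset.range m, (⇑Φ₀)^[j] y with hSdef
        have hstep : ∀ i, uSeq ℓ c i (n + 1)
            = uSeq ℓ c i n + (vtSeq ℓ c i n - vtSeq ℓ c (i + 1) n) := fun i =>
          Finset.sum_range_succ _ n
        show S (n + 1) = ∑ i ∈ Finset.range ℓ, uSeq ℓ c i (n + 1) • S (i + 1)
        have hrhs : ∑ i ∈ Finset.range ℓ, uSeq ℓ c i (n + 1) • S (i + 1)
            = (∑ i ∈ Finset.range ℓ, uSeq ℓ c i n • S (i + 1))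
              + ∑ i ∈ Finset.range ℓ, (vtSeq ℓ c i n - vtSeq ℓ c (i + 1) n) • S (i + 1) := by
          rw [← Finset.sum_add_distrib]
          refine Finset.sum_congr rfl fun i _ => ?_
          rw [hstep i, add_smul]
        have habel : ∑ i ∈ Finset.range ℓ, (vtSeq ℓ c i n - vtSeq ℓ c (i + 1) n) • S (i + 1)
            = (⇑Φ₀)^[n] y := by
          rw [abel_lemma ℓ (fun j => vtSeq ℓ c j n) S (by simp [hSdef])
            (by simp [vtSeq])]
          rw [rep_lemma ℓ c Φ₀ hrec y n]
          refine Finset.sum_congr rfl fun i hi => ?_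
          have h1 : vtSeq ℓ c i n = vSeq ℓ c i n := by
            rw [vtSeq, if_pos (Finset.mem_range.mp hi)]
          have h2 : S (i + 1) - S i = (⇑Φ₀)^[i] y := by
            rw [hSdef]
            simp only [Finset.sum_range_succ]
            abel
          rw [h1, h2]
        rw [hrhs, ← ih, habel, hSdef]
        simp only [Finset.sum_range_succ]
    intro n
    rw [hiter n, hy n, rep_lemma ℓ c Φ₀ hrec α n]
end

section
/- Let K be an algebraically closed field of characteristic p and suppose V ⊂ G_m^N is an irreducible curve containing a set C' = {α₁^{p^{k₁n₁}} · α₂^{p^{k₂n₂}} : n₁, n₂ ∈ ℕ₀} where k₁, k₂ ≥ 1 and α₁, α₂ ∈ G_m^N(K) are not defined over the algebraic closure of F_p (so both F-orbits are infinite). Then V is a translate of a one-dimensional algebraic subgroup of G_m^N. -/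
/-- A Zariski-closed subset of the torus `𝔾_m^N(K)`: the zero set, inside
`(Kˣ)^N`, of a family of polynomials in `N` variables. -/
def IsTorusClosed {K : Type*} [CommRing K] {N : ℕ} (V : Set (Fin N → Kˣ)) : Prop :=
  ∃ I : Set (MvPolynomial (Fin N) K),
    V = {x : Fin N → Kˣ | ∀ f ∈ I, MvPolynomial.eval (fun i => (x i : K)) f = 0}

open MvPolynomial in
/-- The preimage of a torus-closed set under multiplication by a fixed point is closed. -/
lemma isTorusClosed_mul_preimage {K : Type*} [CommRing K] {N : ℕ} {W : Set (Fin N → Kˣ)}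
    (h : IsTorusClosed W) (c : Fin N → Kˣ) : IsTorusClosed {x | c * x ∈ W} := by
  obtain ⟨I, rfl⟩ := h
  refine ⟨(fun f => bind₁ (fun i => C ((c i : K)) * X i) f) '' I, ?_⟩
  have key : ∀ (x : Fin N → Kˣ) (f : MvPolynomial (Fin N) K),
      eval (fun i => ((x i : K))) (bind₁ (fun i => C ((c i : K)) * X i) f)
        = eval (fun i => (((c * x) i : K))) f := by
    intro x f
    rw [show eval (fun i => ((x i : K))) (bind₁ (fun i => C ((c i : K)) * X i) f)
        = eval (fun i => eval (fun j => ((x j : K))) (C ((c i : K)) * X i)) f from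
      eval₂Hom_bind₁ (RingHom.id K) _ _ f]
    exact congrArg (fun v : Fin N → K => eval v f)
      (funext fun i => by simp [Units.val_mul])
  ext x
  constructor
  · intro hx f hf
    obtain ⟨f₀, hf₀, rfl⟩ := hf
    rw [key]
    exact hx f₀ hf₀
  · intro hx f hf
    have := hx _ (Set.mem_image_of_mem _ hf)
    rwa [key] at this

/-- Arbitrary intersections of torus-closed sets are torus-closed. -/
lemma isTorusClosed_iInter {K : Type*} [CommRing K] {N : ℕ} {ι : Sort*}
    {W : ι → Set (Fin N → Kˣ)} (h : ∀ i, IsTorusClosed (W i)) :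
    IsTorusClosed (⋂ i, W i) := by
  choose I hI using h
  refine ⟨⋃ i, I i, ?_⟩
  ext x
  simp only [Set.mem_iInter, Set.mem_setOf_eq, Set.mem_iUnion]
  constructor
  · intro hx f hf
    obtain ⟨i, hfi⟩ := hf
    have := hx i
    rw [hI i] at this
    exact this f hfi
  · intro hx i
    rw [hI i]
    exact fun f hf => hx f ⟨i, hf⟩

/-- A transcendental element is not a root of unity. -/
lemma pow_ne_one_of_transcendental {K : Type*} [Field K] {t : K}
    (ht : Transcendental (⊥ : Subfield K) t) {m : ℕ} (hm : m ≠ 0) : t ^ m ≠ 1 := by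
  intro h
  apply ht
  refine ⟨Polynomial.X ^ m - Polynomial.C 1,
    Polynomial.X_pow_sub_C_ne_zero (Nat.pos_of_ne_zero hm) 1, ?_⟩
  simp [h]

/-- Powers of a unit whose value is transcendental are pairwise distinct. -/
lemma unit_pow_injective {K : Type*} [Field K] {u : Kˣ}
    (ht : Transcendental (⊥ : Subfield K) (u : K)) :
    Function.Injective fun e : ℕ => u ^ e := by
  have key : ∀ a b : ℕ, a < b → u ^ a ≠ u ^ b := by
    intro a b hab h
    have h1 : u ^ a * u ^ (b - a) = u ^ a * 1 := by
      rw [← pow_add, Nat.add_sub_cancel' hab.le, ← h, mul_one]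
    have h2 : u ^ (b - a) = 1 := mul_left_cancel h1
    have h3 : (u : K) ^ (b - a) = 1 := by
      have := congrArg Units.val h2
      simpa using this
    exact pow_ne_one_of_transcendental ht (Nat.sub_ne_zero_of_lt hab) h3
  intro a b hab
  rcases Nat.lt_trichotomy a b with h | h | h
  · exact absurd hab (key a b h)
  · exact h
  · exact absurd hab.symm (key b a h)

/-- Frobenius-orbit powers of a point with a transcendental coordinate are distinct. -/
lemma pi_unit_orbit_injective {K : Type*} [Field K] {N : ℕ} {α : Fin N → Kˣ} {i : Fin N}
    (ht : Transcendental (⊥ : Subfield K) ((α i : K))) {q : ℕ} (hq : 2 ≤ q) :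
    Function.Injective fun n : ℕ => α ^ (q ^ n) := by
  intro a b hab
  have h1 : (α i) ^ (q ^ a) = (α i) ^ (q ^ b) := by
    have := congrFun hab i
    simpa [Pi.pow_apply] using this
  have h2 : q ^ a = q ^ b := unit_pow_injective ht h1
  exact Nat.pow_right_injective hq h2

/-- Let `K` be an algebraically closed field of characteristic `p`
and `V ⊂ 𝔾_m^N` an irreducible curve (here: a Zariski-closed subset of the torus,
irreducible with respect to Zariski-closed sets, and one-dimensional in the sense
that every infinite Zariski-closed subset of `V` contains `V`).  If `V` contains
`C' = {α₁^{p^{k₁n₁}} · α₂^{p^{k₂n₂}} : n₁, n₂ ∈ ℕ₀}` with `k₁, k₂ ≥ 1` and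
`α₁, α₂` not defined over `F̄_p` (some coordinate is transcendental over the prime
field), then `V` is a translate of a one-dimensional (infinite) algebraic subgroup
of `𝔾_m^N`. -/
theorem stmt18 {K : Type*} [Field K] [IsAlgClosed K] (p : ℕ) (hp : p.Prime)
    [CharP K p] (N : ℕ) (V : Set (Fin N → Kˣ))
    (hVcl : IsTorusClosed V) (hVne : V.Nonempty)
    (hVirr : ∀ W₁ W₂ : Set (Fin N → Kˣ), IsTorusClosed W₁ → IsTorusClosed W₂ →
      V ⊆ W₁ ∪ W₂ → V ⊆ W₁ ∨ V ⊆ W₂)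
    (hVcurve : V.Infinite ∧
      ∀ W : Set (Fin N → Kˣ), IsTorusClosed W → W ⊆ V → W.Infinite → V ⊆ W)
    (k₁ k₂ : ℕ) (hk₁ : 1 ≤ k₁) (hk₂ : 1 ≤ k₂)
    (α₁ α₂ : Fin N → Kˣ)
    (hα₁ : ∃ i, Transcendental (⊥ : Subfield K) ((α₁ i : K)))
    (hα₂ : ∃ i, Transcendental (⊥ : Subfield K) ((α₂ i : K)))
    (hC : {x : Fin N → Kˣ | ∃ n₁ n₂ : ℕ,
        x = α₁ ^ (p ^ (k₁ * n₁)) * α₂ ^ (p ^ (k₂ * n₂))} ⊆ V) :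
    ∃ (H : Subgroup (Fin N → Kˣ)) (g : Fin N → Kˣ),
      IsTorusClosed (H : Set (Fin N → Kˣ)) ∧ (H : Set (Fin N → Kˣ)).Infinite ∧
      (∀ W : Set (Fin N → Kˣ), IsTorusClosed W → W ⊆ (H : Set (Fin N → Kˣ)) →
        W.Infinite → (H : Set (Fin N → Kˣ)) ⊆ W) ∧
      V = (fun h => g * h) '' (H : Set (Fin N → Kˣ)) := by
  classical
  obtain ⟨hVinf, hVdim⟩ := hVcurve
  obtain ⟨i₁, ht₁⟩ := hα₁
  obtain ⟨i₂, ht₂⟩ := hα₂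
  set q₁ : ℕ := p ^ k₁ with hq₁def
  set q₂ : ℕ := p ^ k₂ with hq₂def
  have hq₁ : 2 ≤ q₁ := hp.two_le.trans (Nat.le_self_pow (by omega) p)
  have hq₂ : 2 ≤ q₂ := hp.two_le.trans (Nat.le_self_pow (by omega) p)
  -- membership of the double orbit in V
  have hCmem : ∀ n m : ℕ, α₁ ^ (q₁ ^ n) * α₂ ^ (q₂ ^ m) ∈ V := by
    intro n m
    refine hC ⟨n, m, ?_⟩
    rw [hq₁def, hq₂def, ← pow_mul, ← pow_mul]
  -- the Zariski closure T of the Frobenius orbit of α₁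
  set S : Set (Fin N → Kˣ) := Set.range (fun n : ℕ => α₁ ^ (q₁ ^ n)) with hSdef
  set vanI : Set (MvPolynomial (Fin N) K) :=
    {f | ∀ x ∈ S, MvPolynomial.eval (fun i => (x i : K)) f = 0} with hvanIdef
  set T : Set (Fin N → Kˣ) :=
    {x | ∀ f ∈ vanI, MvPolynomial.eval (fun i => (x i : K)) f = 0} with hTdef
  have hTcl : IsTorusClosed T := ⟨vanI, rfl⟩
  have hST : S ⊆ T := fun x hx f hf => hf x hx
  have hTmin : ∀ W : Set (Fin N → Kˣ), IsTorusClosed W → S ⊆ W → T ⊆ W := by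
    rintro W ⟨I, rfl⟩ hSW x hx f hf
    exact hx f (fun y hy => hSW hy f hf)
  -- translates of T by powers of α₂ land in V
  have hc : ∀ m : ℕ, ∀ x ∈ T, α₂ ^ (q₂ ^ m) * x ∈ V := by
    intro m
    have hsub : T ⊆ {x | α₂ ^ (q₂ ^ m) * x ∈ V} := by
      refine hTmin _ (isTorusClosed_mul_preimage hVcl _) ?_
      rintro x ⟨n, rfl⟩
      have := hCmem n m
      simpa [mul_comm] using this
    exact fun x hx => hsub hx
  -- each translate of T equals V
  have hVW : ∀ m : ℕ, V = {x | (α₂ ^ (q₂ ^ m))⁻¹ * x ∈ T} := by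
    intro m
    have hWcl : IsTorusClosed {x | (α₂ ^ (q₂ ^ m))⁻¹ * x ∈ T} :=
      isTorusClosed_mul_preimage hTcl _
    have hWV : {x | (α₂ ^ (q₂ ^ m))⁻¹ * x ∈ T} ⊆ V := by
      intro x hx
      have := hc m _ hx
      rwa [mul_inv_cancel_left] at this
    have hWinf : ({x | (α₂ ^ (q₂ ^ m))⁻¹ * x ∈ T}).Infinite := by
      refine Set.infinite_of_injective_forall_mem
        (f := fun n : ℕ => α₂ ^ (q₂ ^ m) * α₁ ^ (q₁ ^ n)) ?_ ?_
      · intro a b hab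
        exact pi_unit_orbit_injective ht₁ hq₁ (mul_left_cancel hab)
      · intro n
        show (α₂ ^ (q₂ ^ m))⁻¹ * (α₂ ^ (q₂ ^ m) * α₁ ^ (q₁ ^ n)) ∈ T
        rw [inv_mul_cancel_left]
        exact hST ⟨n, rfl⟩
    exact Set.Subset.antisymm (hVdim _ hWcl hWV hWinf) hWV
  -- the stabilizer set M
  set M : Set (Fin N → Kˣ) := {x | ∀ v ∈ V, x * v ∈ V} with hMdef
  have hMcl : IsTorusClosed M := by
    have hM : M = ⋂ v : V, {x | (v : Fin N → Kˣ) * x ∈ V} := by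
      ext x
      simp only [hMdef, Set.mem_setOf_eq, Set.mem_iInter, Subtype.forall]
      constructor
      · intro h v hv
        simpa [mul_comm] using h v hv
      · intro h v hv
        simpa [mul_comm] using h v hv
    rw [hM]
    exact isTorusClosed_iInter fun v => isTorusClosed_mul_preimage hVcl _
  -- stabilizer elements coming from α₂
  have hδM : ∀ m : ℕ, α₂ ^ (q₂ ^ m) * α₂⁻¹ ∈ M := by
    intro m v hv
    have hv0 : α₂⁻¹ * v ∈ T := by
      have h0 := hVW 0
      rw [h0] at hv
      simpa using hv
    have := hc m _ hv0
    rwa [show α₂ ^ (q₂ ^ m) * α₂⁻¹ * v = α₂ ^ (q₂ ^ m) * (α₂⁻¹ * v) from mul_assoc _ _ _]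
  have hδinj : Function.Injective fun m : ℕ => α₂ ^ (q₂ ^ m) * α₂⁻¹ := by
    intro a b hab
    exact pi_unit_orbit_injective ht₂ hq₂ (mul_right_cancel hab)
  have hMinf : M.Infinite := Set.infinite_of_injective_forall_mem hδinj hδM
  -- V = g • M for every g in V
  have hMg : ∀ g ∈ V, V = {y | g⁻¹ * y ∈ M} := by
    intro g hg
    have hcl : IsTorusClosed {y | g⁻¹ * y ∈ M} := isTorusClosed_mul_preimage hMcl _
    have hsub : {y | g⁻¹ * y ∈ M} ⊆ V := by
      intro y hy
      have := hy g hg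
      rwa [show g⁻¹ * y * g = y by rw [mul_comm, ← mul_assoc, mul_inv_cancel, one_mul]] at this
    have hinf : ({y | g⁻¹ * y ∈ M}).Infinite := by
      refine Set.infinite_of_injective_forall_mem
        (f := fun m : ℕ => g * (α₂ ^ (q₂ ^ m) * α₂⁻¹)) ?_ ?_
      · intro a b hab
        exact hδinj (mul_left_cancel hab)
      · intro m
        show g⁻¹ * (g * (α₂ ^ (q₂ ^ m) * α₂⁻¹)) ∈ M
        rw [inv_mul_cancel_left]
        exact hδM m
    exact Set.Subset.antisymm (hVdim _ hcl hsub hinf) hsub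
  have hMchar : ∀ g ∈ V, ∀ x, x ∈ M ↔ g * x ∈ V := by
    intro g hg x
    constructor
    · intro hx
      simpa [mul_comm] using hx g hg
    · intro hx
      have h1 := (hMg g hg) ▸ hx
      rwa [Set.mem_setOf_eq, inv_mul_cancel_left] at h1
  obtain ⟨g, hg⟩ := hVne
  refine ⟨{ carrier := M
            one_mem' := fun v hv => by rwa [one_mul]
            mul_mem' := fun {a b} ha hb v hv => by
              rw [mul_assoc]; exact ha _ (hb v hv)
            inv_mem' := fun {a} ha => by
              have hv : a * g ∈ V := ha g hg
              show a⁻¹ ∈ M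
              rw [hMchar (a * g) hv a⁻¹]
              have h2 : a * g * a⁻¹ = g := by
                rw [mul_comm a g, mul_assoc, mul_inv_cancel, mul_one]
              rwa [h2] }, g, hMcl, hMinf, ?_, ?_⟩
  · -- curve property of M
    intro W hWcl hWM hWinf
    have h1 : IsTorusClosed {y | g⁻¹ * y ∈ W} := isTorusClosed_mul_preimage hWcl _
    have h2 : {y | g⁻¹ * y ∈ W} ⊆ V := by
      intro y hy
      rw [hMg g hg]
      exact hWM hy
    have h3 : ({y | g⁻¹ * y ∈ W}).Infinite := by
      have himg : ((fun w => g * w) '' W).Infinite :=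
        Set.Infinite.image (fun a _ b _ h => mul_left_cancel h) hWinf
      refine himg.mono ?_
      rintro y ⟨w, hw, rfl⟩
      show g⁻¹ * (g * w) ∈ W
      rwa [inv_mul_cancel_left]
    have h4 := hVdim _ h1 h2 h3
    intro x hx
    have hgx : g * x ∈ V := (hMchar g hg x).mp hx
    have h5 := h4 hgx
    rwa [Set.mem_setOf_eq, inv_mul_cancel_left] at h5
  · -- V is the g-translate of M
    ext y
    constructor
    · intro hy
      refine ⟨g⁻¹ * y, ?_, show g * (g⁻¹ * y) = y from mul_inv_cancel_left g y⟩
      rw [hMg g hg] at hy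
      exact hy
    · rintro ⟨x, hx, rfl⟩
      exact (hMchar g hg x).mp hx
end
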